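/- Assume principal binet lift data (bV, bF, uV, uF, hV, hF, ρV, ρF, σV, σF) satisfying relations (i)–(iv), and let P and Λ be the associated Lie lift vectors in ℝ⁶. Then for every incident vertex–face pair (v, f): Q_L(P(v), P(f)) = 0, Q_L(Λ(v), Λ(f)) = 0, Q_L(P(v), Λ(f)) = 0, and Q_L(Λ(v), P(f)) = 0. (The Lie lift of a principal binet is a polar line bicongruence with respect to the Lie quadric: for incident elements, every point of one lift line is Lie-polar to every point of the other.) -/
import Mathlib


open Matrix

/-- A vertex `v` is incident to the face labeled `f` if `v` is one of its four corners. -/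
def Incident (v f : ℤ × ℤ) : Prop :=
  v = f ∨ v = f + (1, 0) ∨ v = f + (0, 1) ∨ v = f + (1, 1)

/-- The Lie form of signature `(++++--)` on `ℝ⁶`. -/
def QL (x y : Fin 6 → ℝ) : ℝ :=
  x 0 * y 0 + x 1 * y 1 + x 2 * y 2 + x 3 * y 3 - x 4 * y 4 - x 5 * y 5

/-- The Möbius part of the Lie lift: `P(d) = (b(d)₀, b(d)₁, b(d)₂, ρ(d) - 1/2, ρ(d) + 1/2, 0)`. -/
noncomputable def Plift (b : ℤ × ℤ → Fin 3 → ℝ) (ρ : ℤ × ℤ → ℝ) (d : ℤ × ℤ) : Fin 6 → ℝ :=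
  ![b d 0, b d 1, b d 2, ρ d - 1 / 2, ρ d + 1 / 2, 0]

/-- The Laguerre part of the Lie lift: `Λ(d) = (u(d)₀, u(d)₁, u(d)₂, -h(d), -h(d), σ(d))`. -/
noncomputable def Llift (u : ℤ × ℤ → Fin 3 → ℝ) (h σ : ℤ × ℤ → ℝ) (d : ℤ × ℤ) : Fin 6 → ℝ :=
  ![u d 0, u d 1, u d 2, -h d, -h d, σ d]

lemma QL_explicit (a b c d e f a' b' c' d' e' f' : ℝ) :
    QL ![a, b, c, d, e, f] ![a', b', c', d', e', f'] =
      a * a' + b * b' + c * c' + d * d' - e * e' - f * f' := rfl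

/-- The Lie lift of a principal binet is a polar line bicongruence with respect to the Lie
quadric: for incident vertex–face pairs, every spanning point of one lift line is Lie-polar to
every spanning point of the other. -/
theorem stmt_13 (bV bF uV uF : ℤ × ℤ → Fin 3 → ℝ) (hV hF ρV ρF σV σF : ℤ × ℤ → ℝ)
    (h1 : ∀ v f : ℤ × ℤ, Incident v f → bV v ⬝ᵥ bF f = ρV v + ρF f)
    (h2 : ∀ v f : ℤ × ℤ, Incident v f → uV v ⬝ᵥ uF f = σV v * σF f)
    (h3 : ∀ v f : ℤ × ℤ, Incident v f → uF f ⬝ᵥ bV v + hF f = 0)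
    (h4 : ∀ v f : ℤ × ℤ, Incident v f → uV v ⬝ᵥ bF f + hV v = 0) :
    ∀ v f : ℤ × ℤ, Incident v f →
      QL (Plift bV ρV v) (Plift bF ρF f) = 0 ∧
      QL (Llift uV hV σV v) (Llift uF hF σF f) = 0 ∧
      QL (Plift bV ρV v) (Llift uF hF σF f) = 0 ∧
      QL (Llift uV hV σV v) (Plift bF ρF f) = 0 := by
  intro v f hvf
  have e1 := h1 v f hvf
  have e2 := h2 v f hvf
  have e3 := h3 v f hvf
  have e4 := h4 v f hvf
  simp only [dotProduct, Fin.sum_univ_three] at e1 e2 e3 e4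
  refine ⟨?_, ?_, ?_, ?_⟩ <;>
    simp only [Plift, Llift, QL_explicit] <;> nlinarith [e1, e2, e3, e4]
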